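/- arXiv:1009.5274 — 2 statements merged into one kernel-verified Lean document; each statement's English description precedes it below -/
import Mathlib

section
/- Let μ ∈ ℂ with μ ∉ {0, 1}, a = (μ+μ⁻¹)/2, b = i(μ⁻¹−μ)/2, regarded as quaternions in the real span of 1 and i. Let n ∈ ℍ with Re n = 0 and n² = −1, φ ∈ ℍ \ {0}, T = ½(n·φ·(a−1)·φ⁻¹ + φ·b·φ⁻¹) (which is nonzero, hence invertible), ρ̂ = φ·((1−a)/2)·φ⁻¹, T̂ = T·ρ̂⁻¹, and N̂ = T⁻¹·n·T. Then N̂·(T̂·ψ) = T̂·(n·ψ) for every ψ ∈ ℍ; in particular, left multiplication by T̂ maps E = {ψ ∈ ℍ : n·ψ = ψ·i} bijectively onto Ê = {ψ ∈ ℍ : N̂·ψ = ψ·i}, i.e. T̂·E = Ê. (The +i eigenspace of the μ-Darboux transform N̂ is T̂E; proof of Theorem 6.1.) -/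
/- The map z ↦ φzφ⁻¹ is a ring homomorphism ℂ → ℍ, so p = φ(a−1)φ⁻¹ and q = φbφ⁻¹
commute, and a² + b² = 1 becomes q² = −p² − 2p. With S = np + q we have T = S/2 and
ρ̂ = −p/2, and S² = (npn + nq + qn − p − 2)p, where the bracket commutes with n because
n² = −1. Hence n commutes with T·T̂ = −S²p⁻¹/2, which is N̂T̂ = T̂n. The same expansion
gives S² = −2p ≠ 0 if S = 0, so T and T̂ are invertible and T̂ carries E onto Ê. -/

noncomputable section
open Complex

local notation "ℍ" => Quaternion ℝ

/-- The quaternion unit i. -/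
def qi : ℍ := ⟨0,1,0,0⟩

/-- Embedding of ℂ into ℍ as the real span of 1 and i. -/
def cq (z : ℂ) : ℍ := ⟨z.re, z.im, 0, 0⟩

/-- a = (μ+μ⁻¹)/2. -/
def aμ (μ : ℂ) : ℂ := (μ + μ⁻¹) / 2

/-- b = i(μ⁻¹−μ)/2. -/
def bμ (μ : ℂ) : ℂ := Complex.I * (μ⁻¹ - μ) / 2

/-- T = ½(n·φ·(a−1)·φ⁻¹ + φ·b·φ⁻¹). -/
def Tq (μ : ℂ) (n φ : ℍ) : ℍ :=
  (n * (φ * cq (aμ μ - 1) * φ⁻¹) + φ * cq (bμ μ) * φ⁻¹) / 2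

/-- ρ̂ = φ·((1−a)/2)·φ⁻¹. -/
def ρhat (μ : ℂ) (φ : ℍ) : ℍ := φ * cq ((1 - aμ μ) / 2) * φ⁻¹

/-- T̂ = T·ρ̂⁻¹. -/
def That (μ : ℂ) (n φ : ℍ) : ℍ := Tq μ n φ * (ρhat μ φ)⁻¹

/-- N̂ = T⁻¹·n·T, the μ-Darboux transform. -/
def Nhat (μ : ℂ) (n φ : ℍ) : ℍ := (Tq μ n φ)⁻¹ * n * Tq μ n φ

section Ring

variable {R : Type*} [Ring R] {n p q : R}

theorem add_mul_self_eq_mul (hpq : Commute p q) (hq : q * q = -(p * p) - 2 * p) (n : R) :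
    (n * p + q) * (n * p + q) = (n * p * n + n * q + q * n - p - 2) * p := by
  calc (n * p + q) * (n * p + q) = n * p * n * p + n * q * p + q * n * p + q * q := by
        rw [mul_assoc n q, ← hpq.eq]; noncomm_ring
    _ = (n * p * n + n * q + q * n - p - 2) * p := by rw [hq]; noncomm_ring

theorem commute_of_mul_self_eq_neg_one (hn : n * n = -1) (x y : R) :
    Commute n (n * x * n + n * y + y * n - x - 2) := by
  have h : n * (n * x * n + n * y + y * n - x - 2) - (n * x * n + n * y + y * n - x - 2) * n
      = n * n * x * n - n * x * (n * n) + n * n * y - y * (n * n) - n * x + x * n := by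
    noncomm_ring
  rw [hn] at h
  exact sub_eq_zero.mp (h.trans (by noncomm_ring))

end Ring

section DivisionRing

variable {D : Type*} [DivisionRing D] {n p q : D}

theorem mul_add_ne_zero_of_mul_self_eq_neg_one (h2 : (2 : D) ≠ 0) (hn : n * n = -1) (hpq : Commute p q)
    (hq : q * q = -(p * p) - 2 * p) (hp : p ≠ 0) : n * p + q ≠ 0 := by
  intro hS
  obtain rfl : q = -(n * p) := eq_neg_of_add_eq_zero_right hS
  have hX : n * p * n + n * -(n * p) + -(n * p) * n - p - 2 = -2 := by
    calc _ = -(n * n) * p - p - 2 := by noncomm_ring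
      _ = -2 := by rw [hn]; noncomm_ring
  have h2p := add_mul_self_eq_mul hpq hq n
  rw [hS, zero_mul, hX, neg_mul, zero_eq_neg] at h2p
  exact hp ((mul_eq_zero.mp h2p).resolve_left h2)

theorem commute_add_mul_self_mul_inv (hn : n * n = -1) (hpq : Commute p q)
    (hq : q * q = -(p * p) - 2 * p) : Commute n ((n * p + q) * (n * p + q) * p⁻¹) := by
  rw [add_mul_self_eq_mul hpq hq, mul_assoc]
  obtain rfl | hp := eq_or_ne p 0
  · simp
  · rw [mul_inv_cancel₀ hp, mul_one]
    exact commute_of_mul_self_eq_neg_one hn p q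

theorem div_two_mul_div_two_mul_inv (h2 : (2 : D) ≠ 0) (x y : D) :
    x / 2 * (x / 2 * (y / 2)⁻¹) = x * x * y⁻¹ / 2 := by
  have hc : Commute (2⁻¹ : D) (x * y⁻¹) := (Commute.ofNat_left 2 _).inv_left₀
  rw [inv_div, div_eq_mul_inv, div_eq_mul_inv, div_eq_mul_inv, mul_assoc x 2⁻¹ (2 * y⁻¹),
    inv_mul_cancel_left₀ h2, mul_assoc, hc.eq, ← mul_assoc, ← mul_assoc]

end DivisionRing

section GroupWithZero

variable {G₀ : Type*} [GroupWithZero G₀] {n N T U : G₀}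

theorem inv_mul_mul_mul_eq_of_commute (hT : T ≠ 0) (h : Commute n (T * U)) (ψ : G₀) :
    T⁻¹ * n * T * (U * ψ) = U * (n * ψ) := by
  calc T⁻¹ * n * T * (U * ψ) = T⁻¹ * (n * (T * U)) * ψ := by simp only [mul_assoc]
    _ = T⁻¹ * (T * U * n) * ψ := by rw [h.eq]
    _ = U * (n * ψ) := by rw [mul_assoc T, inv_mul_cancel_left₀ hT, mul_assoc]

theorem bijOn_mul_left_of_intertwines (hU : U ≠ 0) (h : ∀ ψ, N * (U * ψ) = U * (n * ψ)) (e : G₀) :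
    Set.BijOn (U * ·) {ψ | n * ψ = ψ * e} {ψ | N * ψ = ψ * e} := by
  have hmem : ∀ ψ, N * (U * ψ) = U * ψ * e ↔ n * ψ = ψ * e := fun ψ => by
    rw [h, mul_assoc, mul_right_inj' hU]
  refine ⟨fun ψ hψ => (hmem ψ).mpr hψ, fun x _ y _ hxy => mul_left_cancel₀ hU hxy, ?_⟩
  intro χ hχ
  refine ⟨U⁻¹ * χ, (hmem _).mp ?_, mul_inv_cancel_left₀ hU χ⟩
  rwa [mul_inv_cancel_left₀ hU]

end GroupWithZero

theorem aμ_sub_one_ne_zero {μ : ℂ} (hμ : μ ≠ 1) : aμ μ - 1 ≠ 0 := by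
  obtain rfl | hμ0 := eq_or_ne μ 0
  · simp [aμ]
  · intro h
    have hsq : (μ - 1) ^ 2 = 2 * μ * (aμ μ - 1) := by unfold aμ; field_simp; ring
    rw [h, mul_zero, sq_eq_zero_iff, sub_eq_zero] at hsq
    exact hμ hsq

theorem aμ_sq_add_bμ_sq {μ : ℂ} (hμ : μ ≠ 0) : aμ μ ^ 2 + bμ μ ^ 2 = 1 := by
  unfold aμ bμ
  field_simp
  linear_combination (μ ^ 2 - 1) ^ 2 * I_sq

theorem map_bμ_mul_self {R : Type*} [Ring R] (f : ℂ →+* R) {μ : ℂ} (hμ : μ ≠ 0) :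
    f (bμ μ) * f (bμ μ) = -(f (aμ μ - 1) * f (aμ μ - 1)) - 2 * f (aμ μ - 1) := by
  rw [← map_mul, ← map_mul, ← map_ofNat f 2, ← map_mul, ← map_neg, ← map_sub]
  congr 1
  linear_combination aμ_sq_add_bμ_sq hμ

theorem stmt_11_general (μ : ℂ) (hμ0 : μ ≠ 0) (hμ1 : μ ≠ 1)
    (n : ℍ) (hsq : n * n = -1)
    (φ : ℍ) (hφ : φ ≠ 0) :
    (∀ ψ : ℍ, Nhat μ n φ * (That μ n φ * ψ) = That μ n φ * (n * ψ))
    ∧ Set.BijOn (fun ψ => That μ n φ * ψ)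
        {ψ : ℍ | n * ψ = ψ * qi} {ψ : ℍ | Nhat μ n φ * ψ = ψ * qi}
    ∧ (fun ψ => That μ n φ * ψ) '' {ψ : ℍ | n * ψ = ψ * qi}
        = {ψ : ℍ | Nhat μ n φ * ψ = ψ * qi} := by
  let f : ℂ →+* ℍ := (MulSemiringAction.toRingHom (ConjAct ℍˣ) ℍ
    (ConjAct.toConjAct (Units.mk0 φ hφ))).comp Quaternion.ofComplex.toRingHom
  have h2 : (2 : ℍ) ≠ 0 := by
    have h2f := (map_ne_zero f).mpr (two_ne_zero : (2 : ℂ) ≠ 0)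
    rwa [map_ofNat] at h2f
  set p := f (aμ μ - 1)
  set q := f (bμ μ)
  have hp : p ≠ 0 := (map_ne_zero f).mpr (aμ_sub_one_ne_zero hμ1)
  have hpq : Commute p q := (Commute.all _ _).map f
  have hq : q * q = -(p * p) - 2 * p := map_bμ_mul_self f hμ0
  have hT : Tq μ n φ = (n * p + q) / 2 := rfl
  have hρ : ρhat μ φ = -p / 2 := by
    change f ((1 - aμ μ) / 2) = _
    rw [show (1 - aμ μ) / 2 = -(aμ μ - 1) / 2 by ring, map_div₀, map_neg, map_ofNat]
  have hT0 : Tq μ n φ ≠ 0 := by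
    rw [hT]; exact div_ne_zero (mul_add_ne_zero_of_mul_self_eq_neg_one h2 hsq hpq hq hp) h2
  have hcomm : Commute n (Tq μ n φ * That μ n φ) := by
    rw [That, hT, hρ, div_two_mul_div_two_mul_inv h2, inv_neg, mul_neg]
    exact (commute_add_mul_self_mul_inv hsq hpq hq).neg_right.div_right (.ofNat_right n 2)
  have hThat0 : That μ n φ ≠ 0 :=
    mul_ne_zero hT0 (inv_ne_zero (hρ ▸ div_ne_zero (neg_ne_zero.mpr hp) h2))
  have hintertwine := inv_mul_mul_mul_eq_of_commute hT0 hcomm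
  have hbij := bijOn_mul_left_of_intertwines hThat0 hintertwine qi
  exact ⟨hintertwine, hbij, hbij.image_eq⟩

theorem stmt_11 (μ : ℂ) (hμ0 : μ ≠ 0) (hμ1 : μ ≠ 1)
    (n : ℍ) (hre : n.re = 0) (hsq : n * n = -1)
    (φ : ℍ) (hφ : φ ≠ 0) :
    (∀ ψ : ℍ, Nhat μ n φ * (That μ n φ * ψ) = That μ n φ * (n * ψ))
    ∧ Set.BijOn (fun ψ => That μ n φ * ψ)
        {ψ : ℍ | n * ψ = ψ * qi} {ψ : ℍ | Nhat μ n φ * ψ = ψ * qi}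
    ∧ (fun ψ => That μ n φ * ψ) '' {ψ : ℍ | n * ψ = ψ * qi}
        = {ψ : ℍ | Nhat μ n φ * ψ = ψ * qi} :=
  stmt_11_general μ hμ0 hμ1 n hsq φ hφ
end
end

section
/- Let μ ∈ ℂ with μ ∉ {0, 1}, a = (μ+μ⁻¹)/2, b = i(μ⁻¹−μ)/2, regarded as quaternions in the real span of 1 and i. Let n ∈ ℍ with Re n = 0 and n² = −1, φ ∈ ℍ \ {0}, T = ½(n·φ·(a−1)·φ⁻¹ + φ·b·φ⁻¹), ρ̂ = φ·((1−a)/2)·φ⁻¹, T̂ = T·ρ̂⁻¹, and set γ_∞ = (1 − conj(μ)⁻¹)/(1 − μ) ∈ ℂ. Then for all c, d ∈ ℂ (regarded as quaternions in the span of 1 and i): (T̂ + n)·(φ·c + φ·j·d) − (φ·c + φ·j·d)·i = −(φ·γ_∞·c + φ·j·d)·(2i/(1 − conj(μ)⁻¹)). (The identity T̂ + N − I = −r_∞ ∘ (2I/(1−μ̄⁻¹)) from the proof of Theorem 6.1, evaluated on the decomposition ℍ = φℂ ⊕ φjℂ.) -/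
/- The identity T̂ + N − I = −r_∞ ∘ (2I/(1−μ̄⁻¹)) from the proof of
Theorem 6.1, evaluated on the decomposition ℍ = φℂ ⊕ φjℂ. -/

noncomputable section
open Complex

local notation "ℍ" => Quaternion ℝ

/-- The quaternion unit j. -/
def qj : ℍ := ⟨0,0,1,0⟩

/-- γ_∞ = (1 − μ̄⁻¹)/(1 − μ). -/
def γinf (μ : ℂ) : ℂ := (1 - (starRingEnd ℂ μ)⁻¹) / (1 - μ)


/-!
Since `a − 1 = −2 (1 − a)/2` and `b = 2 β (1 − a)/2` with `β = b / (1 − a) = i (1 + μ) / (μ − 1)`,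
and conjugation by `φ` is multiplicative, `T = (φ β φ⁻¹ − n) ρ̂`; hence `T̂ + n = φ β φ⁻¹`.
Left multiplication by `φ β φ⁻¹` sends `φ c + φ j d` to `φ c β + φ j d β̄`, because `z j = j z̄`
for complex `z`. The identity thus reduces to the complex identities `i − β = γ_∞ κ` and
`i − β̄ = κ` for `κ = 2i / (1 − μ̄⁻¹)`.
-/

@[simp] lemma cq_re (z : ℂ) : (cq z).re = z.re := rfl
@[simp] lemma cq_imI (z : ℂ) : (cq z).imI = z.im := rfl
@[simp] lemma cq_imJ (z : ℂ) : (cq z).imJ = 0 := rfl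
@[simp] lemma cq_imK (z : ℂ) : (cq z).imK = 0 := rfl

def cqRingHom : ℂ →+* ℍ where
  toFun := cq
  map_one' := by
    ext <;> simp [Quaternion.re_one, Quaternion.imI_one, Quaternion.imJ_one, Quaternion.imK_one]
  map_mul' _ _ := by ext <;> simp [Complex.mul_re, Complex.mul_im]
  map_zero' := by
    ext <;> simp [Quaternion.re_zero, Quaternion.imI_zero, Quaternion.imJ_zero, Quaternion.imK_zero]
  map_add' _ _ := by ext <;> simp

lemma cq_mul (z w : ℂ) : cq (z * w) = cq z * cq w := map_mul cqRingHom z w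
lemma cq_sub (z w : ℂ) : cq (z - w) = cq z - cq w := map_sub cqRingHom z w
lemma cq_neg (z : ℂ) : cq (-z) = -cq z := map_neg cqRingHom z
lemma cq_ofNat (k : ℕ) [k.AtLeastTwo] : cq (OfNat.ofNat k) = OfNat.ofNat k :=
  map_ofNat cqRingHom k
lemma cq_ne_zero {z : ℂ} (hz : z ≠ 0) : cq z ≠ 0 := (map_ne_zero cqRingHom).2 hz

lemma qi_eq_cq_I : qi = cq I := by ext <;> simp [qi]

lemma cq_mul_qj (z : ℂ) : cq z * qj = qj * cq (starRingEnd ℂ z) := by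
  ext <;> simp [Quaternion.re_mul, Quaternion.imI_mul, Quaternion.imJ_mul, Quaternion.imK_mul] <;>
    simp [qj]

section Conjugation

variable {φ : ℍ}

lemma conj_cq_mul_conj_cq (hφ : φ ≠ 0) (z w : ℂ) :
    φ * cq z * φ⁻¹ * (φ * cq w * φ⁻¹) = φ * cq (z * w) * φ⁻¹ := by
  simp only [mul_assoc, inv_mul_cancel_left₀ hφ, cq_mul]

lemma conj_cq_two_mul (z : ℂ) : φ * cq (2 * z) * φ⁻¹ = 2 * (φ * cq z * φ⁻¹) := by
  rw [cq_mul, cq_ofNat]; noncomm_ring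

lemma conj_cq_mul_decomp (hφ : φ ≠ 0) (β c d : ℂ) :
    φ * cq β * φ⁻¹ * (φ * cq c + φ * qj * cq d)
      = φ * cq (c * β) + φ * qj * cq (d * starRingEnd ℂ β) := by
  simp only [mul_add, mul_assoc, inv_mul_cancel_left₀ hφ, ← mul_assoc (cq β) qj, cq_mul_qj,
    ← cq_mul, mul_comm β, mul_comm (starRingEnd ℂ β)]

end Conjugation

lemma decomp_mul_cq (φ : ℍ) (c d w : ℂ) :
    (φ * cq c + φ * qj * cq d) * cq w = φ * cq (c * w) + φ * qj * cq (d * w) := by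
  simp only [add_mul, mul_assoc, cq_mul]

lemma one_sub_aμ_eq (μ : ℂ) (hμ0 : μ ≠ 0) : 1 - aμ μ = -(μ - 1) ^ 2 / (2 * μ) := by
  rw [aμ]; field_simp; ring

lemma one_sub_aμ_ne_zero {μ : ℂ} (hμ0 : μ ≠ 0) (hμ1 : μ ≠ 1) : 1 - aμ μ ≠ 0 := by
  rw [one_sub_aμ_eq μ hμ0]
  exact div_ne_zero (neg_ne_zero.2 (pow_ne_zero 2 (sub_ne_zero.2 hμ1)))
    (mul_ne_zero two_ne_zero hμ0)

lemma bμ_div_one_sub_aμ {μ : ℂ} (hμ0 : μ ≠ 0) (hμ1 : μ ≠ 1) :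
    bμ μ / (1 - aμ μ) = I * (1 + μ) / (μ - 1) := by
  have hμ1' : μ - 1 ≠ 0 := sub_ne_zero.2 hμ1
  rw [one_sub_aμ_eq μ hμ0, bμ]
  field_simp
  ring

lemma Tq_eq {μ : ℂ} (n : ℍ) {φ : ℍ} (hφ : φ ≠ 0) (ha : 1 - aμ μ ≠ 0) :
    Tq μ n φ = (φ * cq (bμ μ / (1 - aμ μ)) * φ⁻¹ - n) * ρhat μ φ := by
  have hρ : φ * cq (aμ μ - 1) * φ⁻¹ = 2 * -ρhat μ φ := by
    rw [ρhat, show aμ μ - 1 = 2 * -((1 - aμ μ) / 2) by ring, conj_cq_two_mul, cq_neg]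
    noncomm_ring
  have hσb : φ * cq (bμ μ) * φ⁻¹ = 2 * (φ * cq (bμ μ / (1 - aμ μ)) * φ⁻¹ * ρhat μ φ) := by
    rw [ρhat, conj_cq_mul_conj_cq hφ, ← conj_cq_two_mul]
    congr 3
    field_simp
  rw [Tq, hρ, hσb, show ∀ x : ℍ, n * (2 * -ρhat μ φ) + 2 * (x * ρhat μ φ)
      = (x - n) * ρhat μ φ * 2 from fun x ↦ by noncomm_ring,
    mul_div_cancel_right₀ _ (cq_ofNat 2 ▸ cq_ne_zero two_ne_zero)]

lemma That_add_eq {μ : ℂ} (hμ0 : μ ≠ 0) (hμ1 : μ ≠ 1) (n : ℍ) {φ : ℍ} (hφ : φ ≠ 0) :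
    That μ n φ + n = φ * cq (I * (1 + μ) / (μ - 1)) * φ⁻¹ := by
  have ha := one_sub_aμ_ne_zero hμ0 hμ1
  have hρ : ρhat μ φ ≠ 0 :=
    mul_ne_zero (mul_ne_zero hφ (cq_ne_zero (div_ne_zero ha two_ne_zero))) (inv_ne_zero hφ)
  rw [That, Tq_eq n hφ ha, mul_inv_cancel_right₀ hρ, sub_add_cancel, bμ_div_one_sub_aμ hμ0 hμ1]

lemma γinf_mul_eq {μ : ℂ} (hμ1 : μ ≠ 1) :
    γinf μ * (2 * I / (1 - (starRingEnd ℂ μ)⁻¹)) = I - I * (1 + μ) / (μ - 1) := by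
  have hμ1' : μ - 1 ≠ 0 := sub_ne_zero.2 hμ1
  have hμ1'' : 1 - μ ≠ 0 := sub_ne_zero.2 hμ1.symm
  have hconj : 1 - (starRingEnd ℂ μ)⁻¹ ≠ 0 := by
    rw [sub_ne_zero, ne_comm, inv_ne_one, ne_eq, map_eq_one_iff _ (starRingEnd ℂ).injective]
    exact hμ1
  rw [γinf, div_mul_div_cancel₀' hconj]
  field_simp
  ring

lemma two_I_div_one_sub_conj_inv {μ : ℂ} (hμ0 : μ ≠ 0) (hμ1 : μ ≠ 1) :
    2 * I / (1 - (starRingEnd ℂ μ)⁻¹) = I - starRingEnd ℂ (I * (1 + μ) / (μ - 1)) := by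
  have hμ0' : starRingEnd ℂ μ ≠ 0 := (map_ne_zero _).2 hμ0
  have hμ1' : starRingEnd ℂ μ - 1 ≠ 0 := by
    rw [sub_ne_zero, ne_eq, map_eq_one_iff _ (starRingEnd ℂ).injective]
    exact hμ1
  simp only [map_div₀, map_mul, map_add, map_sub, map_one, conj_I]
  field_simp
  ring

theorem stmt_12_general (μ : ℂ) (hμ0 : μ ≠ 0) (hμ1 : μ ≠ 1)
    (n : ℍ)
    (φ : ℍ) (hφ : φ ≠ 0) :
    ∀ c d : ℂ,
      (That μ n φ + n) * (φ * cq c + φ * qj * cq d)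
          - (φ * cq c + φ * qj * cq d) * qi
        = -((φ * cq (γinf μ) * cq c + φ * qj * cq d)
            * cq (2 * Complex.I / (1 - (starRingEnd ℂ μ)⁻¹))) := by
  intro c d
  rw [That_add_eq hμ0 hμ1 n hφ, conj_cq_mul_decomp hφ, qi_eq_cq_I, mul_assoc φ (cq _), ← cq_mul,
    mul_comm (γinf μ), decomp_mul_cq, decomp_mul_cq, mul_assoc c, γinf_mul_eq hμ1,
    two_I_div_one_sub_conj_inv hμ0 hμ1]
  simp only [mul_sub, cq_sub]
  noncomm_ring

theorem stmt_12 (μ : ℂ) (hμ0 : μ ≠ 0) (hμ1 : μ ≠ 1)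
    (n : ℍ) (hre : n.re = 0) (hsq : n * n = -1)
    (φ : ℍ) (hφ : φ ≠ 0) :
    ∀ c d : ℂ,
      (That μ n φ + n) * (φ * cq c + φ * qj * cq d)
          - (φ * cq c + φ * qj * cq d) * qi
        = -((φ * cq (γinf μ) * cq c + φ * qj * cq d)
            * cq (2 * Complex.I / (1 - (starRingEnd ℂ μ)⁻¹))) :=
  stmt_12_general μ hμ0 hμ1 n φ hφ
end
end
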